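/- arXiv:2410.04276 — 5 statements merged into one kernel-verified Lean document; each statement's English description precedes it below -/
import Mathlib

section
/- If L is a Nijenhuis operator, then for any polynomial p with real coefficients, the operator field p(L) is also a Nijenhuis operator. -/
/-- Lie bracket of vector fields on a (model) vector space. -/
noncomputable def vBracket {E : Type*} [NormedAddCommGroup E] [NormedSpace ℝ E]
    (v w : E → E) : E → E :=
  fun x => fderiv ℝ w x (v x) - fderiv ℝ v x (w x)

/-- Nijenhuis torsion of an operator field `L`:
`N_L(v,w) = L²[v,w] + [Lv,Lw] - L[Lv,w] - L[v,Lw]`. -/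
noncomputable def nijTorsion {E : Type*} [NormedAddCommGroup E] [NormedSpace ℝ E]
    (L : E → (E →L[ℝ] E)) (v w : E → E) : E → E :=
  fun x =>
    L x (L x (vBracket v w x))
      + vBracket (fun y => L y (v y)) (fun y => L y (w y)) x
      - L x (vBracket (fun y => L y (v y)) w x)
      - L x (vBracket v (fun y => L y (w y)) x)

section Aux

variable {E : Type*} [NormedAddCommGroup E] [NormedSpace ℝ E]

/-- Mixed (polarized, non-symmetrized) torsion of two operator fields. -/
noncomputable def mixK (A B : E → (E →L[ℝ] E)) (v w : E → E) : E → E := fun x =>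
  A x (B x (vBracket v w x))
    + vBracket (fun y => A y (v y)) (fun y => B y (w y)) x
    - A x (vBracket v (fun y => B y (w y)) x)
    - B x (vBracket (fun y => A y (v y)) w x)

lemma nijTorsion_eq_mixK (L : E → (E →L[ℝ] E)) (v w : E → E) (x : E) :
    nijTorsion L v w x = mixK L L v w x := by
  simp only [nijTorsion, mixK]; abel

lemma vBracket_add_left {u u' w : E → E} {x : E}
    (hu : DifferentiableAt ℝ u x) (hu' : DifferentiableAt ℝ u' x) :
    vBracket (fun y => u y + u' y) w x = vBracket u w x + vBracket u' w x := by
  simp only [vBracket, fderiv_fun_add hu hu', ContinuousLinearMap.add_apply, map_add]; abel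

lemma vBracket_add_right {v u u' : E → E} {x : E}
    (hu : DifferentiableAt ℝ u x) (hu' : DifferentiableAt ℝ u' x) :
    vBracket v (fun y => u y + u' y) x = vBracket v u x + vBracket v u' x := by
  simp only [vBracket, fderiv_fun_add hu hu', ContinuousLinearMap.add_apply, map_add]; abel

lemma vBracket_smul_left {u w : E → E} {x : E} (a : ℝ) (hu : DifferentiableAt ℝ u x) :
    vBracket (fun y => a • u y) w x = a • vBracket u w x := by
  simp only [vBracket, fderiv_fun_const_smul hu a, ContinuousLinearMap.smul_apply, map_smul, smul_sub]

lemma vBracket_smul_right {v u : E → E} {x : E} (a : ℝ) (hu : DifferentiableAt ℝ u x) :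
    vBracket v (fun y => a • u y) x = a • vBracket v u x := by
  simp only [vBracket, fderiv_fun_const_smul hu a, ContinuousLinearMap.smul_apply, map_smul, smul_sub]

lemma mixK_add_left {A A' B : E → (E →L[ℝ] E)} {v w : E → E} {x : E}
    (hAv : DifferentiableAt ℝ (fun y => A y (v y)) x)
    (hA'v : DifferentiableAt ℝ (fun y => A' y (v y)) x) :
    mixK (fun y => A y + A' y) B v w x = mixK A B v w x + mixK A' B v w x := by
  simp only [mixK, ContinuousLinearMap.add_apply, map_add, vBracket_add_left hAv hA'v]; abel

lemma mixK_add_right {A B B' : E → (E →L[ℝ] E)} {v w : E → E} {x : E}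
    (hBw : DifferentiableAt ℝ (fun y => B y (w y)) x)
    (hB'w : DifferentiableAt ℝ (fun y => B' y (w y)) x) :
    mixK A (fun y => B y + B' y) v w x = mixK A B v w x + mixK A B' v w x := by
  simp only [mixK, ContinuousLinearMap.add_apply, map_add, vBracket_add_right hBw hB'w]; abel

lemma mixK_smul_left {A B : E → (E →L[ℝ] E)} {v w : E → E} {x : E} (a : ℝ)
    (hAv : DifferentiableAt ℝ (fun y => A y (v y)) x) :
    mixK (fun y => a • A y) B v w x = a • mixK A B v w x := by
  simp only [mixK, ContinuousLinearMap.smul_apply, map_smul,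
    vBracket_smul_left a hAv, smul_sub, smul_add]

lemma mixK_smul_right {A B : E → (E →L[ℝ] E)} {v w : E → E} {x : E} (a : ℝ)
    (hBw : DifferentiableAt ℝ (fun y => B y (w y)) x) :
    mixK A (fun y => a • B y) v w x = a • mixK A B v w x := by
  simp only [mixK, ContinuousLinearMap.smul_apply, map_smul,
    vBracket_smul_right a hBw, smul_sub, smul_add]

lemma mixK_one_left (B : E → (E →L[ℝ] E)) (v w : E → E) (x : E) :
    mixK (fun _ => (1 : E →L[ℝ] E)) B v w x = 0 := by
  simp only [mixK, ContinuousLinearMap.one_apply]; abel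

lemma mixK_one_right (A : E → (E →L[ℝ] E)) (v w : E → E) (x : E) :
    mixK A (fun _ => (1 : E →L[ℝ] E)) v w x = 0 := by
  simp only [mixK, ContinuousLinearMap.one_apply]; abel

lemma mixK_compL_left (L A B : E → (E →L[ℝ] E)) (v w : E → E) (x : E) :
    mixK (fun y => (L y).comp (A y)) B v w x
      = mixK L B (fun y => A y (v y)) w x + L x (mixK A B v w x) := by
  simp only [mixK, ContinuousLinearMap.comp_apply, map_add, map_sub]; abel

lemma mixK_compL_right (L A B : E → (E →L[ℝ] E)) (v w : E → E) (x : E)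
    (hAL : ∀ t, A x (L x t) = L x (A x t)) :
    mixK A (fun y => (L y).comp (B y)) v w x
      = mixK A L v (fun y => B y (w y)) x + L x (mixK A B v w x) := by
  simp only [mixK, ContinuousLinearMap.comp_apply, map_add, map_sub, hAL]; abel

lemma contDiff_powL {L : E → (E →L[ℝ] E)} (hL : ContDiff ℝ (⊤ : ℕ∞) L) (n : ℕ) :
    ContDiff ℝ (⊤ : ℕ∞) (fun y => (L y) ^ n) := by
  induction n with
  | zero => simpa using contDiff_const
  | succ n ih =>
    have h : (fun y => (L y) ^ (n + 1)) = fun y => (L y).comp ((L y) ^ n) := by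
      funext y; rw [pow_succ']; rfl
    rw [h]; exact hL.clm_comp ih

lemma contDiff_aevalL {L : E → (E →L[ℝ] E)} (hL : ContDiff ℝ (⊤ : ℕ∞) L) (q : Polynomial ℝ) :
    ContDiff ℝ (⊤ : ℕ∞) (fun y => Polynomial.aeval (L y) q) := by
  induction q using Polynomial.induction_on' with
  | add p q hp hq => simpa only [map_add] using hp.add hq
  | monomial n a =>
    have h : (fun y => Polynomial.aeval (L y) (Polynomial.monomial n a))
        = fun y => a • (L y) ^ n := by
      funext y
      simp [Polynomial.aeval_monomial, Algebra.smul_def]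
    rw [h]; exact (contDiff_powL hL n).const_smul a

/-- Step 1: `K(L, Lʲ) = 0` for all smooth fields. -/
lemma mixK_L_pow {L : E → (E →L[ℝ] E)} (hL : ContDiff ℝ (⊤ : ℕ∞) L)
    (hN : ∀ v w : E → E, ContDiff ℝ (⊤ : ℕ∞) v → ContDiff ℝ (⊤ : ℕ∞) w →
      ∀ x, nijTorsion L v w x = 0) (j : ℕ) :
    ∀ v w : E → E, ContDiff ℝ (⊤ : ℕ∞) v → ContDiff ℝ (⊤ : ℕ∞) w → ∀ x,
      mixK L (fun y => (L y) ^ j) v w x = 0 := by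
  induction j with
  | zero =>
    intro v w hv hw x
    simpa only [pow_zero] using mixK_one_right (E := E) L v w x
  | succ j ih =>
    intro v w hv hw x
    have h : (fun y => (L y) ^ (j + 1)) = fun y => (L y).comp ((L y) ^ j) := by
      funext y; rw [pow_succ']; rfl
    rw [h, mixK_compL_right L L (fun y => (L y) ^ j) v w x (fun _ => rfl)]
    have h1 : mixK L L v (fun y => ((L y) ^ j) (w y)) x = 0 := by
      rw [← nijTorsion_eq_mixK]
      exact hN v _ hv ((contDiff_powL hL j).clm_apply hw) x
    rw [h1, ih v w hv hw x, map_zero, add_zero]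

/-- Step 2: `K(Lⁱ, Lʲ) = 0` for all smooth fields. -/
lemma mixK_pow_pow {L : E → (E →L[ℝ] E)} (hL : ContDiff ℝ (⊤ : ℕ∞) L)
    (hN : ∀ v w : E → E, ContDiff ℝ (⊤ : ℕ∞) v → ContDiff ℝ (⊤ : ℕ∞) w →
      ∀ x, nijTorsion L v w x = 0) (i j : ℕ) :
    ∀ v w : E → E, ContDiff ℝ (⊤ : ℕ∞) v → ContDiff ℝ (⊤ : ℕ∞) w → ∀ x,
      mixK (fun y => (L y) ^ i) (fun y => (L y) ^ j) v w x = 0 := by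
  induction i with
  | zero =>
    intro v w hv hw x
    simpa only [pow_zero] using mixK_one_left (E := E) (fun y => (L y) ^ j) v w x
  | succ i ih =>
    intro v w hv hw x
    have h : (fun y => (L y) ^ (i + 1)) = fun y => (L y).comp ((L y) ^ i) := by
      funext y; rw [pow_succ']; rfl
    rw [h, mixK_compL_left L (fun y => (L y) ^ i) (fun y => (L y) ^ j) v w x]
    rw [mixK_L_pow hL hN j _ w ((contDiff_powL hL i).clm_apply hv) hw x,
      ih v w hv hw x, map_zero, add_zero]

/-- Step 3: `K(Lⁱ, r(L)) = 0`. -/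
lemma mixK_pow_aeval {L : E → (E →L[ℝ] E)} (hL : ContDiff ℝ (⊤ : ℕ∞) L)
    (hN : ∀ v w : E → E, ContDiff ℝ (⊤ : ℕ∞) v → ContDiff ℝ (⊤ : ℕ∞) w →
      ∀ x, nijTorsion L v w x = 0) (i : ℕ) (r : Polynomial ℝ)
    (v w : E → E) (hv : ContDiff ℝ (⊤ : ℕ∞) v) (hw : ContDiff ℝ (⊤ : ℕ∞) w) (x : E) :
    mixK (fun y => (L y) ^ i) (fun y => Polynomial.aeval (L y) r) v w x = 0 := by
  induction r using Polynomial.induction_on' with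
  | add p q hp hq =>
    have h : (fun y => Polynomial.aeval (L y) (p + q))
        = fun y => Polynomial.aeval (L y) p + Polynomial.aeval (L y) q := by
      funext y; rw [map_add]
    rw [h, mixK_add_right
      (((contDiff_aevalL hL p).clm_apply hw).differentiable (by simp)).differentiableAt
      (((contDiff_aevalL hL q).clm_apply hw).differentiable (by simp)).differentiableAt,
      hp, hq, add_zero]
  | monomial n a =>
    have h : (fun y => Polynomial.aeval (L y) (Polynomial.monomial n a))
        = fun y => a • (L y) ^ n := by
      funext y; simp [Polynomial.aeval_monomial, Algebra.smul_def]
    rw [h, mixK_smul_right a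
      (((contDiff_powL hL n).clm_apply hw).differentiable (by simp)).differentiableAt,
      mixK_pow_pow hL hN i n v w hv hw x, smul_zero]

/-- Step 4: `K(q(L), r(L)) = 0`. -/
lemma mixK_aeval_aeval {L : E → (E →L[ℝ] E)} (hL : ContDiff ℝ (⊤ : ℕ∞) L)
    (hN : ∀ v w : E → E, ContDiff ℝ (⊤ : ℕ∞) v → ContDiff ℝ (⊤ : ℕ∞) w →
      ∀ x, nijTorsion L v w x = 0) (q r : Polynomial ℝ)
    (v w : E → E) (hv : ContDiff ℝ (⊤ : ℕ∞) v) (hw : ContDiff ℝ (⊤ : ℕ∞) w) (x : E) :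
    mixK (fun y => Polynomial.aeval (L y) q) (fun y => Polynomial.aeval (L y) r) v w x = 0 := by
  induction q using Polynomial.induction_on' with
  | add p q hp hq =>
    have h : (fun y => Polynomial.aeval (L y) (p + q))
        = fun y => Polynomial.aeval (L y) p + Polynomial.aeval (L y) q := by
      funext y; rw [map_add]
    rw [h, mixK_add_left
      (((contDiff_aevalL hL p).clm_apply hv).differentiable (by simp)).differentiableAt
      (((contDiff_aevalL hL q).clm_apply hv).differentiable (by simp)).differentiableAt,
      hp, hq, add_zero]
  | monomial n a =>
    have h : (fun y => Polynomial.aeval (L y) (Polynomial.monomial n a))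
        = fun y => a • (L y) ^ n := by
      funext y; simp [Polynomial.aeval_monomial, Algebra.smul_def]
    rw [h, mixK_smul_left a
      (((contDiff_powL hL n).clm_apply hv).differentiable (by simp)).differentiableAt,
      mixK_pow_aeval hL hN n r v w hv hw x, smul_zero]

end Aux

/-- if L is a Nijenhuis operator, then for every real polynomial p
the operator field p(L) is also a Nijenhuis operator. -/
theorem polynomial_of_nijenhuis_is_nijenhuis
    {E : Type*} [NormedAddCommGroup E] [NormedSpace ℝ E]
    (L : E → (E →L[ℝ] E)) (hL : ContDiff ℝ (⊤ : ℕ∞) L)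
    (hN : ∀ v w : E → E, ContDiff ℝ (⊤ : ℕ∞) v → ContDiff ℝ (⊤ : ℕ∞) w →
      ∀ x, nijTorsion L v w x = 0)
    (p : Polynomial ℝ)
    (v w : E → E) (hv : ContDiff ℝ (⊤ : ℕ∞) v) (hw : ContDiff ℝ (⊤ : ℕ∞) w) (x : E) :
    nijTorsion (fun y => Polynomial.aeval (L y) p) v w x = 0 := by
  rw [nijTorsion_eq_mixK]
  exact mixK_aeval_aeval hL hN p p v w hv hw x
end

section
/- The (1,1)-tensor field on ℝⁿ given in coordinates (x₁,...,xₙ) by the first companion matrix L with first column (-x₁,...,-xₙ) and the identity shift in the superdiagonal (i.e., L e₁ = -(x₁,...,xₙ) and L e_{j} = e_{j-1} for j ≥ 2) is a Nijenhuis operator, and its characteristic polynomial equals tⁿ + x₁t^{n-1} + ... + xₙ. -/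
/-- The first companion operator field on ℝⁿ: first column is (-x₁,…,-xₙ),
superdiagonal entries are 1. -/
def companionMatrix (n : ℕ) (x : Fin n → ℝ) : Matrix (Fin n) (Fin n) ℝ :=
  Matrix.of fun i j => if (j : ℕ) = 0 then -x i else if (j : ℕ) = (i : ℕ) + 1 then 1 else 0

noncomputable def companionOp (n : ℕ) (x : Fin n → ℝ) : (Fin n → ℝ) →L[ℝ] (Fin n → ℝ) :=
  LinearMap.toContinuousLinearMap (Matrix.toLin' (companionMatrix n x))

noncomputable def shiftOp (n : ℕ) : (Fin n → ℝ) →L[ℝ] (Fin n → ℝ) :=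
  LinearMap.toContinuousLinearMap (Matrix.toLin'
    (Matrix.of fun i j : Fin n => if (j : ℕ) = (i : ℕ) + 1 then (1:ℝ) else 0))

lemma companionOp_eq (m : ℕ) (y u : Fin (m+1) → ℝ) :
    companionOp (m+1) y u = shiftOp (m+1) u - u 0 • y := by
  funext i
  have key : ∀ j : Fin (m+1),
      (if (j:ℕ) = 0 then -y i else if (j:ℕ) = (i:ℕ)+1 then (1:ℝ) else 0) * u j
      = (if (j:ℕ) = (i:ℕ)+1 then (1:ℝ) else 0) * u j
        + (if j = (0 : Fin (m+1)) then -(y i) * u j else 0) := by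
    intro j
    rcases eq_or_ne (j:ℕ) 0 with h0 | h0
    · have hj : j = 0 := Fin.ext (by rw [h0]; simp)
      subst hj
      simp only [Fin.val_zero, if_true]
      simp only [show ¬(0 = (i:ℕ) + 1) by omega, if_false]
      ring
    · rw [if_neg h0, if_neg (show j ≠ 0 from fun h => h0 (by simp [h]))]
      ring
  simp only [companionOp, shiftOp, LinearMap.coe_toContinuousLinearMap',
    Matrix.toLin'_apply, Matrix.mulVec, dotProduct, companionMatrix, Matrix.of_apply,
    Pi.sub_apply, Pi.smul_apply, smul_eq_mul]
  rw [Finset.sum_congr rfl (fun j _ => key j), Finset.sum_add_distrib,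
    Finset.sum_ite_eq' Finset.univ (0 : Fin (m+1))]
  simp only [Finset.mem_univ, if_true]
  ring

lemma hasFDerivAt_Lv (m : ℕ) (v : (Fin (m+1) → ℝ) → (Fin (m+1) → ℝ))
    (x : Fin (m+1) → ℝ) (v' : (Fin (m+1) → ℝ) →L[ℝ] (Fin (m+1) → ℝ))
    (hv : HasFDerivAt v v' x) :
    HasFDerivAt (fun y => companionOp (m+1) y (v y))
      (shiftOp (m+1) ∘L v'
        - (v x 0 • ContinuousLinearMap.id ℝ (Fin (m+1) → ℝ)
            + ((ContinuousLinearMap.proj (R := ℝ) (φ := fun _ : Fin (m+1) => ℝ) 0) ∘L v').smulRight x)) x := by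
  have hfun : (fun y => companionOp (m+1) y (v y))
      = fun y => shiftOp (m+1) (v y) - (v y 0) • y := by
    funext y; rw [companionOp_eq]
  rw [hfun]
  have h1 : HasFDerivAt (fun y => shiftOp (m+1) (v y)) (shiftOp (m+1) ∘L v') x :=
    (shiftOp (m+1)).hasFDerivAt.comp x hv
  have h2 : HasFDerivAt (fun y : Fin (m+1) → ℝ => v y 0)
      ((ContinuousLinearMap.proj (R := ℝ) (φ := fun _ : Fin (m+1) => ℝ) 0) ∘L v') x := by
    exact
      (ContinuousLinearMap.proj (R := ℝ) (φ := fun _ : Fin (m+1) => ℝ) 0).hasFDerivAt.comp x hv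
  exact h1.sub (h2.smul (hasFDerivAt_id x))

theorem companion_torsion_aux (n : ℕ) (x : Fin n → ℝ) (v w : (Fin n → ℝ) → (Fin n → ℝ))
    (hv : ContDiff ℝ (⊤ : ℕ∞) v) (hw : ContDiff ℝ (⊤ : ℕ∞) w) :
    nijTorsion (companionOp n) v w x = 0 := by
  cases n with
  | zero => exact Subsingleton.elim _ _
  | succ m =>
    have hv' : HasFDerivAt v (fderiv ℝ v x) x :=
      (hv.differentiable (by simp) x).hasFDerivAt
    have hw' : HasFDerivAt w (fderiv ℝ w x) x :=
      (hw.differentiable (by simp) x).hasFDerivAt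
    have hLv := (hasFDerivAt_Lv m v x _ hv').fderiv
    have hLw := (hasFDerivAt_Lv m w x _ hw').fderiv
    simp only [nijTorsion, vBracket, hLv, hLw]
    simp only [companionOp_eq, ContinuousLinearMap.sub_apply, ContinuousLinearMap.add_apply,
      ContinuousLinearMap.comp_apply, ContinuousLinearMap.smul_apply,
      ContinuousLinearMap.id_apply, ContinuousLinearMap.smulRight_apply,
      ContinuousLinearMap.proj_apply, map_sub, map_add, map_smul, smul_sub, smul_add,
      Pi.sub_apply, Pi.smul_apply, smul_eq_mul]
    funext i
    simp only [Pi.sub_apply, Pi.add_apply, Pi.smul_apply, Pi.zero_apply, smul_eq_mul]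
    ring

open Polynomial Matrix

lemma companion_charpoly : ∀ (n : ℕ) (x : Fin n → ℝ),
    (companionMatrix n x).charpoly
      = X ^ n + ∑ i : Fin n, C (x i) * X ^ (n - 1 - (i : ℕ)) := by
  intro n
  induction n with
  | zero => intro x; simp [Matrix.charpoly]
  | succ m ih =>
    intro x
    cases m with
    | zero =>
      simp [Matrix.charpoly, Matrix.det_fin_one, charmatrix_apply_eq, companionMatrix,
        sub_neg_eq_add]
    | succ m =>
      set A := (companionMatrix (m+2) x).charmatrix with hA
      have hrow : ∀ j : Fin (m+2),
          (-1 : ℝ[X]) ^ ((Fin.last (m+1) : ℕ) + (j:ℕ)) * A (Fin.last (m+1)) j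
              * Matrix.det (A.submatrix (Fin.last (m+1)).succAbove j.succAbove)
          = (if j = 0 then (-1 : ℝ[X]) ^ ((m+1 : ℕ)) * C (x (Fin.last (m+1)))
                * Matrix.det (A.submatrix (Fin.last (m+1)).succAbove (0 : Fin (m+2)).succAbove)
              else 0)
            + (if j = Fin.last (m+1) then
                X * Matrix.det (A.submatrix (Fin.last (m+1)).succAbove (Fin.last (m+1)).succAbove)
              else 0) := by
        intro j
        rcases eq_or_ne j 0 with rfl | hj0
        · rw [if_pos rfl, if_neg (by simp [Fin.ext_iff])]
          have : A (Fin.last (m+1)) 0 = C (x (Fin.last (m+1))) := by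
            rw [hA, charmatrix_apply_ne _ _ _ (by simp [Fin.ext_iff])]
            simp [companionMatrix]
          rw [this, Fin.val_last]; simp only [Fin.val_zero, pow_zero, mul_one]; ring
        rcases eq_or_ne j (Fin.last (m+1)) with rfl | hjl
        · rw [if_neg hj0, if_pos rfl]
          have : A (Fin.last (m+1)) (Fin.last (m+1)) = X := by
            rw [hA, charmatrix_apply_eq]
            simp [companionMatrix, Fin.val_last,
              (show ((Fin.last (m+1)) : ℕ) ≠ 0 by simp)]
          rw [this]
          rw [show ((Fin.last (m+1) : ℕ) + (Fin.last (m+1) : ℕ)) = 2*(m+1) by simp [Fin.val_last]; ring]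
          rw [pow_mul]; norm_num
        · rw [if_neg hj0, if_neg hjl]
          have : A (Fin.last (m+1)) j = 0 := by
            rw [hA, charmatrix_apply_ne _ _ _ (Ne.symm hjl)]
            have h1 : (j : ℕ) ≠ 0 := fun h => hj0 (Fin.ext (by rw [h]; simp))
            have h2 : (j : ℕ) ≠ m + 1 + 1 := Nat.ne_of_lt j.isLt
            simp [companionMatrix, h1, h2, hj0]
          rw [this]; ring
      rw [Matrix.charpoly, Matrix.det_succ_row _ (Fin.last (m+1)), Finset.sum_congr rfl
        (fun j _ => hrow j), Finset.sum_add_distrib, Finset.sum_ite_eq' , Finset.sum_ite_eq']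
      simp only [Finset.mem_univ, if_true]
      rw [Fin.succAbove_last, Fin.succAbove_zero]
      have hD : A.submatrix Fin.castSucc Fin.castSucc
          = (companionMatrix (m+1) (fun i => x i.castSucc)).charmatrix := by
        ext i j
        rcases eq_or_ne i j with rfl | hij
        · rw [Matrix.submatrix_apply, hA, charmatrix_apply_eq, charmatrix_apply_eq]
          simp [companionMatrix]
        · rw [Matrix.submatrix_apply, hA,
            charmatrix_apply_ne _ _ _ (fun h => hij (Fin.castSucc_injective _ h)),
            charmatrix_apply_ne _ _ _ hij]
          simp [companionMatrix]
      have hB : (A.submatrix Fin.castSucc Fin.succ).det = (-1 : ℝ[X]) ^ (m+1) := by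
        have ht : (A.submatrix Fin.castSucc Fin.succ).BlockTriangular OrderDual.toDual := by
          intro i j hlt
          have hij : (i : ℕ) < (j : ℕ) := hlt
          rw [Matrix.submatrix_apply, hA,
            charmatrix_apply_ne _ _ _ (by simp [Fin.ext_iff]; omega)]
          simp only [companionMatrix, Matrix.of_apply, Fin.val_succ, Fin.coe_castSucc]
          rw [if_neg (by omega), if_neg (by omega)]
          simp
        rw [Matrix.det_of_lowerTriangular _ ht]
        have hd : ∀ i : Fin (m+1), (A.submatrix Fin.castSucc Fin.succ) i i = -1 := by
          intro i
          rw [Matrix.submatrix_apply, hA,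
            charmatrix_apply_ne _ _ _ (by simp [Fin.ext_iff])]
          simp [companionMatrix]
        rw [Finset.prod_congr rfl (fun i _ => hd i)]
        simp
      rw [hB, hD, ← Matrix.charpoly, ih]
      have hneg : ((-1:ℝ[X])^(m+1)) * C (x (Fin.last (m+1))) * ((-1:ℝ[X])^(m+1))
          = C (x (Fin.last (m+1))) := by
        rw [mul_right_comm, ← pow_add]
        simp [← two_mul, pow_mul]
      rw [hneg]
      have hsum : X * ∑ i : Fin (m+1), C (x i.castSucc) * X ^ (m + 1 - 1 - (i:ℕ))
          = ∑ i : Fin (m+1), C (x i.castSucc) * X ^ (m + 2 - 1 - (i:ℕ)) := by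
        rw [Finset.mul_sum]
        refine Finset.sum_congr rfl fun i _ => ?_
        have he : m + 2 - 1 - (i:ℕ) = (m + 1 - 1 - (i:ℕ)) + 1 := by
          have := i.isLt; omega
        rw [he, pow_succ]; ring
      rw [mul_add, hsum, Fin.sum_univ_castSucc
        (f := fun i : Fin (m+2) => C (x i) * X ^ (m + 2 - 1 - (i:ℕ)))]
      simp only [Fin.coe_castSucc, Fin.val_last]
      rw [show m + 2 - 1 - (m+1) = 0 by omega]
      ring

/-- the first companion operator field is a Nijenhuis operator, and
its characteristic polynomial is tⁿ + x₁ t^{n-1} + ⋯ + xₙ. -/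
theorem companion_is_nijenhuis (n : ℕ) (x : Fin n → ℝ) :
    (∀ v w : (Fin n → ℝ) → (Fin n → ℝ), ContDiff ℝ (⊤ : ℕ∞) v → ContDiff ℝ (⊤ : ℕ∞) w →
      nijTorsion (companionOp n) v w x = 0) ∧
    (companionMatrix n x).charpoly
      = Polynomial.X ^ n
        + ∑ i : Fin n, Polynomial.C (x i) * Polynomial.X ^ (n - 1 - (i : ℕ)) := by
  constructor
  · intro v w hv hw
    exact companion_torsion_aux n x v w hv hw
  · exact companion_charpoly n x
end

section
/- Let L be a Nijenhuis operator on a manifold M. Then for any vector field ξ, the Lie derivative of det(L) along Lξ equals det(L) times the Lie derivative of tr(L) along ξ; equivalently L*(d det L) = det L · d tr L as 1-forms. -/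
open Matrix


/-- The determinant, as a continuous multilinear map in the rows. -/
noncomputable def detCMM (n : ℕ) :
    ContinuousMultilinearMap ℝ (fun _ : Fin n => (Fin n → ℝ)) ℝ :=
  MultilinearMap.mkContinuous
    ((Matrix.detRowAlternating : (Fin n → ℝ) [⋀^Fin n]→ₗ[ℝ] ℝ)).toMultilinearMap
    (n.factorial : ℝ) (by
      intro m
      have h1 : (Matrix.detRowAlternating : (Fin n → ℝ) [⋀^Fin n]→ₗ[ℝ] ℝ).toMultilinearMap m
          = Matrix.det (Matrix.of m) := rfl
      rw [h1, Matrix.det_apply]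
      refine (norm_sum_le _ _).trans ?_
      have hterm : ∀ σ : Equiv.Perm (Fin n),
          ‖Equiv.Perm.sign σ • ∏ i, Matrix.of m (σ i) i‖ ≤ ∏ i, ‖m i‖ := by
        intro σ
        have h2 : ‖Equiv.Perm.sign σ • ∏ i, Matrix.of m (σ i) i‖
            = ‖∏ i, m (σ i) i‖ := by
          rcases Int.units_eq_one_or (Equiv.Perm.sign σ) with h | h <;>
            simp [h, Matrix.of_apply]
        rw [h2]
        have h3 : ‖∏ i, m (σ i) i‖ ≤ ∏ i, ‖m (σ i)‖ := by
          rw [Real.norm_eq_abs, Finset.abs_prod]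
          exact Finset.prod_le_prod (fun _ _ => abs_nonneg _)
            (fun i _ => norm_le_pi_norm (m (σ i)) i)
        calc ‖∏ i, m (σ i) i‖ ≤ ∏ i, ‖m (σ i)‖ := h3
          _ = ∏ i, ‖m i‖ := Equiv.prod_comp σ (fun i => ‖m i‖)
      refine (Finset.sum_le_sum fun σ _ => hterm σ).trans ?_
      rw [Finset.sum_const, Finset.card_univ, Fintype.card_perm, nsmul_eq_mul, Fintype.card_fin])

lemma sum_det_updateRow {n : ℕ} (A H : Matrix (Fin n) (Fin n) ℝ) :
    ∑ i, (A.updateRow i (H i)).det = (A.adjugate * H).trace := by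
  have h1 : ∀ i, (A.updateRow i (H i)).det = ∑ k, H i k * A.adjugate k i := by
    intro i
    have hH : H i = ∑ k, H i k • (Pi.single k 1 : Fin n → ℝ) := by
      funext j
      simp [Finset.sum_apply, Pi.single_apply]
    rw [← Matrix.cramer_transpose_apply]
    conv_lhs => rw [hH]
    rw [map_sum, Finset.sum_apply]
    refine Finset.sum_congr rfl fun k _ => ?_
    rw [_root_.map_smul, Pi.smul_apply, smul_eq_mul, Matrix.cramer_transpose_apply,
      ← Matrix.adjugate_apply]
  simp only [h1, Matrix.trace, Matrix.diag, Matrix.mul_apply]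
  rw [Finset.sum_comm]
  exact Finset.sum_congr rfl fun i _ => Finset.sum_congr rfl fun k _ => mul_comm _ _

/-- for a Nijenhuis operator L, the pullback by L of the
differential of det L equals det L times the differential of tr L:
L*(d det L) = det L · d tr L. -/
theorem nijenhuis_det_trace_identity
    {E : Type*} [NormedAddCommGroup E] [NormedSpace ℝ E] [FiniteDimensional ℝ E]
    (L : E → (E →L[ℝ] E)) (hL : ContDiff ℝ (⊤ : ℕ∞) L)
    (hN : ∀ v w : E → E, ContDiff ℝ (⊤ : ℕ∞) v → ContDiff ℝ (⊤ : ℕ∞) w →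
      ∀ x, nijTorsion L v w x = 0)
    (x ξ : E) :
    fderiv ℝ (fun y => LinearMap.det ((L y : E →ₗ[ℝ] E))) x (L x ξ)
      = LinearMap.det ((L x : E →ₗ[ℝ] E))
        * fderiv ℝ (fun y => LinearMap.trace ℝ E (L y : E →ₗ[ℝ] E)) x ξ := by
  classical
  have hc : DifferentiableAt ℝ L x := (hL.differentiable (by simp)).differentiableAt
  set DL := fderiv ℝ L x with hDLdef
  have hLd : HasFDerivAt L DL x := hc.hasFDerivAt
  -- derivative of `y ↦ L y v` for fixed `v`
  have hflip : ∀ v : E, fderiv ℝ (fun y => L y v) x = DL.flip v := by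
    intro v
    have h := fderiv_clm_apply (c := L) (u := fun _ => v) hc (differentiableAt_const v)
    simpa [fderiv_const] using h
  -- pointwise Nijenhuis identity for constant vector fields
  have key : ∀ v w : E,
      DL (L x v) w - DL (L x w) v + L x (DL w v) - L x (DL v w) = 0 := by
    intro v w
    have h := hN (fun _ => v) (fun _ => w) contDiff_const contDiff_const x
    simp only [nijTorsion, vBracket, fderiv_const, fderiv_const_apply, Pi.zero_apply,
      ContinuousLinearMap.zero_apply, sub_zero, zero_sub, map_zero, hflip,
      ContinuousLinearMap.flip_apply, map_neg, zero_add, sub_neg_eq_add] at h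
    -- h should be the desired identity up to `abel`
    rw [← h]
  -- operator form of the identity
  have op : DL (L x ξ)
      = ((DL.flip ξ).comp (L x) - (L x).comp (DL.flip ξ)) + (L x).comp (DL ξ) := by
    ext w
    apply eq_of_sub_eq_zero
    rw [← key ξ w]
    simp only [ContinuousLinearMap.add_apply, ContinuousLinearMap.sub_apply,
      ContinuousLinearMap.comp_apply, ContinuousLinearMap.flip_apply]
    abel
  -- pass to matrices
  set n := Module.finrank ℝ E with hn
  let b : Module.Basis (Fin n) ℝ E := Module.finBasis ℝ E
  let Φ : (E →L[ℝ] E) →ₗ[ℝ] Matrix (Fin n) (Fin n) ℝ :=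
    (LinearMap.toMatrix b b).toLinearMap ∘ₗ ContinuousLinearMap.coeLM ℝ
  have hΦ : ∀ φ : E →L[ℝ] E, Φ φ = LinearMap.toMatrix b b (φ : E →ₗ[ℝ] E) := fun φ => rfl
  have hΦmul : ∀ φ ψ : E →L[ℝ] E, Φ (φ.comp ψ) = Φ φ * Φ ψ := by
    intro φ ψ
    rw [hΦ, hΦ, hΦ, ContinuousLinearMap.toLinearMap_comp, LinearMap.toMatrix_comp b b b]
  set Am := Φ (L x) with hAm
  set Bm := Φ (DL.flip ξ) with hBm
  set Nm := Φ (DL ξ) with hNm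
  have hPm : Φ (DL (L x ξ)) = Bm * Am - Am * Bm + Am * Nm := by
    rw [op, map_add, map_sub, hΦmul, hΦmul, hΦmul]
  -- the rows of `Φ (L y)` as continuous linear functions of `L y`
  let ρ : Fin n → ((E →L[ℝ] E) →ₗ[ℝ] (Fin n → ℝ)) := fun i =>
    { toFun := fun φ => Φ φ i
      map_add' := by
        intro φ ψ; show Φ (φ + ψ) i = Φ φ i + Φ ψ i; rw [map_add]; rfl
      map_smul' := by
        intro c φ; show Φ (c • φ) i = c • Φ φ i; rw [_root_.map_smul]; rfl }
  let ρc : Fin n → ((E →L[ℝ] E) →L[ℝ] (Fin n → ℝ)) := fun i =>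
    LinearMap.toContinuousLinearMap (ρ i)
  have hg : ∀ i : Fin n, HasFDerivAt (fun y => Φ (L y) i) ((ρc i).comp DL) x :=
    fun i => (ρc i).hasFDerivAt.comp x hLd
  have hD := HasFDerivAt.multilinear_comp (f := detCMM n) hg
  have hfun : (fun y => detCMM n (fun i => Φ (L y) i))
      = fun y => LinearMap.det ((L y : E →ₗ[ℝ] E)) := by
    funext y
    rw [← LinearMap.det_toMatrix b ((L y : E →ₗ[ℝ] E))]
    rfl
  rw [hfun] at hD
  rw [hD.fderiv]
  have hLHS : (∑ i, ((detCMM n).toContinuousLinearMap (fun j => Φ (L x) j) i) ∘L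
        ((ρc i).comp DL)) (L x ξ)
      = ∑ i, (Am.updateRow i (Φ (DL (L x ξ)) i)).det := by
    rw [ContinuousLinearMap.sum_apply]
    exact Finset.sum_congr rfl fun i _ => rfl
  rw [hLHS, sum_det_updateRow Am (Φ (DL (L x ξ))), hPm]
  -- trace algebra with the adjugate
  have tralg : (Am.adjugate * (Bm * Am - Am * Bm + Am * Nm)).trace
      = Am.det * Nm.trace := by
    rw [Matrix.mul_add, Matrix.mul_sub, Matrix.trace_add, Matrix.trace_sub,
      ← Matrix.mul_assoc, ← Matrix.mul_assoc, ← Matrix.mul_assoc,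
      Matrix.trace_mul_cycle Am.adjugate Bm Am, Matrix.mul_adjugate,
      Matrix.adjugate_mul]
    simp only [Matrix.smul_mul, one_mul, Matrix.trace_smul, smul_eq_mul]
    ring
  rw [tralg]
  -- the trace side
  let Tc : (E →L[ℝ] E) →L[ℝ] ℝ :=
    LinearMap.toContinuousLinearMap
      ((LinearMap.trace ℝ E).comp (ContinuousLinearMap.coeLM ℝ))
  have hTr : HasFDerivAt (fun y => LinearMap.trace ℝ E (L y : E →ₗ[ℝ] E))
      (Tc.comp DL) x := Tc.hasFDerivAt.comp x hLd
  rw [hTr.fderiv]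
  have hTval : (Tc.comp DL) ξ = Nm.trace := by
    show LinearMap.trace ℝ E ((DL ξ : E →ₗ[ℝ] E)) = Nm.trace
    rw [LinearMap.trace_eq_matrix_trace ℝ b, hNm, hΦ]
  rw [hTval, ← LinearMap.det_toMatrix b ((L x : E →ₗ[ℝ] E)), ← hΦ, ← hAm]
end

section
/- Let L be a Nijenhuis operator and f a conservation law of L, i.e., the 1-form L*df is closed. Define the hierarchy f₁ = f and df_{k+1} = L*df_k (assuming these local primitives exist). Then each 1-form (L*)^k df is closed, so the hierarchy is well-defined locally. -/
/-- A 1-form α is closed iff its derivative is symmetric. -/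
def IsClosedOneForm {E : Type*} [NormedAddCommGroup E] [NormedSpace ℝ E]
    (α : E → (E →L[ℝ] ℝ)) : Prop :=
  ∀ x u v, fderiv ℝ α x u v = fderiv ℝ α x v u

/-- Pullback of a 1-form by an operator field: (L*α)(v) = α(Lv). -/
def pullbackForm {E : Type*} [NormedAddCommGroup E] [NormedSpace ℝ E]
    (L : E → (E →L[ℝ] E)) (α : E → (E →L[ℝ] ℝ)) : E → (E →L[ℝ] ℝ) :=
  fun x => (α x).comp (L x)

section Aux

variable {E : Type*} [NormedAddCommGroup E] [NormedSpace ℝ E]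

lemma pullbackForm_contDiff {L : E → (E →L[ℝ] E)} (hL : ContDiff ℝ (⊤ : ℕ∞) L)
    {α : E → (E →L[ℝ] ℝ)} (hα : ContDiff ℝ (⊤ : ℕ∞) α) :
    ContDiff ℝ (⊤ : ℕ∞) (pullbackForm L α) :=
  hα.clm_comp hL

lemma fderiv_pullback {L : E → (E →L[ℝ] E)} (hL : ContDiff ℝ (⊤ : ℕ∞) L)
    {α : E → (E →L[ℝ] ℝ)} (hα : ContDiff ℝ (⊤ : ℕ∞) α) (x u v : E) :
    fderiv ℝ (pullbackForm L α) x u v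
      = fderiv ℝ α x u (L x v) + α x (fderiv ℝ L x u v) := by
  have h := fderiv_clm_comp (hα.differentiable (by simp) x) (hL.differentiable (by simp) x)
  unfold pullbackForm
  rw [h]
  simp only [ContinuousLinearMap.add_apply, ContinuousLinearMap.coe_comp', Function.comp_apply,
    ContinuousLinearMap.compL_apply, ContinuousLinearMap.flip_apply]
  abel

/-- Derivative of `y ↦ L y a` for a fixed vector `a`. -/
lemma fderiv_apply_const {L : E → (E →L[ℝ] E)} (hL : ContDiff ℝ (⊤ : ℕ∞) L) (a x w : E) :
    fderiv ℝ (fun y => L y a) x w = fderiv ℝ L x w a := by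
  have h := fderiv_clm_apply (hL.differentiable (by simp) x) (differentiableAt_const a)
  simp only [fderiv_fun_const] at h
  rw [h]
  simp

/-- Nijenhuis torsion on constant fields. -/
lemma nij_const {L : E → (E →L[ℝ] E)} (hL : ContDiff ℝ (⊤ : ℕ∞) L)
    (hN : ∀ v w : E → E, ContDiff ℝ (⊤ : ℕ∞) v → ContDiff ℝ (⊤ : ℕ∞) w →
      ∀ x, nijTorsion L v w x = 0) (x a b : E) :
    fderiv ℝ L x (L x a) b - fderiv ℝ L x (L x b) a
      + L x (fderiv ℝ L x b a) - L x (fderiv ℝ L x a b) = 0 := by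
  have h := hN (fun _ => a) (fun _ => b) contDiff_const contDiff_const x
  have hLa : Differentiable ℝ (fun y => L y a) := fun y =>
    ((hL.differentiable (by simp)).clm_apply (differentiable_const a)) y
  have hLb : Differentiable ℝ (fun y => L y b) := fun y =>
    ((hL.differentiable (by simp)).clm_apply (differentiable_const b)) y
  simp only [nijTorsion, vBracket, fderiv_fun_const, Pi.zero_apply,
    ContinuousLinearMap.zero_apply, sub_zero, zero_sub, map_zero, zero_add,
    map_neg, sub_neg_eq_add] at h
  rw [fderiv_apply_const hL a x (L x b), fderiv_apply_const hL b x (L x a),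
    fderiv_apply_const hL a x b, fderiv_apply_const hL b x a] at h
  exact h

/-- The key inductive step. -/
lemma step {L : E → (E →L[ℝ] E)} (hL : ContDiff ℝ (⊤ : ℕ∞) L)
    (hN : ∀ v w : E → E, ContDiff ℝ (⊤ : ℕ∞) v → ContDiff ℝ (⊤ : ℕ∞) w →
      ∀ x, nijTorsion L v w x = 0)
    {α : E → (E →L[ℝ] ℝ)} (hα : ContDiff ℝ (⊤ : ℕ∞) α)
    (hcα : IsClosedOneForm α) (hcβ : IsClosedOneForm (pullbackForm L α)) :
    IsClosedOneForm (pullbackForm L (pullbackForm L α)) := by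
  intro x u v
  have hβ : ContDiff ℝ (⊤ : ℕ∞) (pullbackForm L α) := pullbackForm_contDiff hL hα
  have hDβ : ∀ a b : E, fderiv ℝ (pullbackForm L α) x a b
      = fderiv ℝ α x a (L x b) + α x (fderiv ℝ L x a b) :=
    fun a b => fderiv_pullback hL hα x a b
  rw [fderiv_pullback hL hβ x u v, fderiv_pullback hL hβ x v u, hDβ, hDβ]
  simp only [pullbackForm, ContinuousLinearMap.comp_apply]
  -- closedness of β, instantiated
  have c1 := hcβ x u (L x v)
  have c2 := hcβ x v (L x u)
  rw [hDβ, hDβ] at c1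
  rw [hDβ, hDβ] at c2
  have c3 := hcα x (L x u) (L x v)
  have c4 : α x (fderiv ℝ L x (L x v) u - fderiv ℝ L x (L x u) v
      + L x (fderiv ℝ L x u v) - L x (fderiv ℝ L x v u)) = (0 : ℝ) := by
    rw [nij_const hL hN x v u]; simp
  simp only [map_sub, map_add] at c4
  linarith

end Aux

/-- if L is Nijenhuis and f is a conservation law (L*df closed),
then every 1-form (L*)^k df is closed, so the hierarchy of conservation laws
is well-defined locally. -/

theorem conservation_law_hierarchy
    {E : Type*} [NormedAddCommGroup E] [NormedSpace ℝ E]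
    (L : E → (E →L[ℝ] E)) (hL : ContDiff ℝ (⊤ : ℕ∞) L)
    (hN : ∀ v w : E → E, ContDiff ℝ (⊤ : ℕ∞) v → ContDiff ℝ (⊤ : ℕ∞) w →
      ∀ x, nijTorsion L v w x = 0)
    (f : E → ℝ) (hf : ContDiff ℝ (⊤ : ℕ∞) f)
    (hcl : IsClosedOneForm (pullbackForm L (fun x => fderiv ℝ f x))) :
    ∀ k : ℕ, IsClosedOneForm ((pullbackForm L)^[k] (fun x => fderiv ℝ f x)) := by
  set α0 : E → (E →L[ℝ] ℝ) := fun x => fderiv ℝ f x with hα0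
  have hsm : ∀ k, ContDiff ℝ (⊤ : ℕ∞) ((pullbackForm L)^[k] α0) := by
    intro k
    induction k with
    | zero => simpa using (hf.fderiv_right (m := (⊤ : ℕ∞)) le_rfl)
    | succ n ih => rw [Function.iterate_succ_apply']; exact pullbackForm_contDiff hL ih
  have key : ∀ k, IsClosedOneForm ((pullbackForm L)^[k] α0)
      ∧ IsClosedOneForm ((pullbackForm L)^[k+1] α0) := by
    intro k
    induction k with
    | zero =>
      constructor
      · intro x u v
        exact (hf.contDiffAt.isSymmSndFDerivAt (by rw [minSmoothness_of_isRCLikeNormedField]; exact WithTop.coe_le_coe.mpr le_top)) u v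
      · simpa using hcl
    | succ n ih =>
      refine ⟨ih.2, ?_⟩
      have h2 : (pullbackForm L)^[n+2] α0
          = pullbackForm L (pullbackForm L ((pullbackForm L)^[n] α0)) := by
        rw [Function.iterate_succ_apply', Function.iterate_succ_apply']
      rw [h2]
      have h1 : (pullbackForm L)^[n+1] α0 = pullbackForm L ((pullbackForm L)^[n] α0) := by
        rw [Function.iterate_succ_apply']
      exact step hL hN (hsm n) ih.1 (h1 ▸ ih.2)
  exact fun k => (key k).1
end

section
/- Let T be a (1,2)-tensor field on a manifold such that T(Lξ,η) = T(ξ,Lη) for a gl-regular operator field L admitting a cyclic vector field ξ (so ξ, Lξ, ..., L^{n-1}ξ form a frame), and suppose the product ξ∘η = T(ξ,η) satisfies T(L^pξ, L^qξ) = R·L^{p+q}ξ where R is a polynomial in L with function coefficients. Then the operation ∘ is commutative and associative. -/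
/-!
Symmetry of `T` with respect to `L` lets every polynomial in `L` pass from one slot of `T` to
the other, so `T (q₁(L) ξ) (q₂(L) ξ) = T ξ ((q₁ q₂)(L) ξ) = (R q₁ q₂)(L) ξ`, the last step being
the hypothesis for `L⁰ ξ = ξ`. As `ξ` is cyclic, every vector is some `q(L) ξ`, and `∘` becomes the
product `q₁ ∘ q₂ = R q₁ q₂` on polynomials, which is commutative and associative.
-/

open Polynomial

section CyclicProduct

variable {R E : Type*} [CommRing R] [AddCommGroup E] [Module R E]
  {ℓ : Module.End R E} {T : E →ₗ[R] E →ₗ[R] E} {e : E} {p : R[X]}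

theorem Module.End.exists_aeval_apply_eq_of_span_pow_eq_top {ι : Type*} {g : ι → ℕ}
    (hspan : Submodule.span R (Set.range fun i => (ℓ ^ g i) e) = ⊤) (u : E) :
    ∃ q : R[X], aeval ℓ q e = u := by
  have hle : Submodule.span R (Set.range fun i => (ℓ ^ g i) e) ≤
      LinearMap.range ((LinearMap.applyₗ e).comp (aeval ℓ).toLinearMap) := by
    rw [Submodule.span_le]
    rintro _ ⟨i, rfl⟩
    exact ⟨X ^ g i, by simp⟩
  simpa using (hspan ▸ hle) (Submodule.mem_top (x := u))

theorem apply_pow_eq_of_apply_eq (hsym : ∀ u v, T (ℓ u) v = T u (ℓ v)) (k : ℕ) (u v : E) :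
    T ((ℓ ^ k) u) v = T u ((ℓ ^ k) v) := by
  induction k generalizing u v with
  | zero => simp
  | succ k ih =>
    rw [pow_succ', Module.End.mul_apply, hsym, ih, ← Module.End.mul_apply (ℓ ^ k), pow_mul_comm']

theorem apply_aeval_eq_of_apply_eq (hsym : ∀ u v, T (ℓ u) v = T u (ℓ v)) (q : R[X])
    (u v : E) : T (aeval ℓ q u) v = T u (aeval ℓ q v) := by
  induction q using Polynomial.induction_on' with
  | add f g hf hg => simp only [map_add, LinearMap.add_apply, hf, hg]
  | monomial k r => simp [aeval_monomial, apply_pow_eq_of_apply_eq hsym]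

theorem apply_aeval_aeval_eq (hsym : ∀ u v, T (ℓ u) v = T u (ℓ v))
    (hp : ∀ k : ℕ, T e ((ℓ ^ k) e) = aeval ℓ p ((ℓ ^ k) e)) (q₁ q₂ : R[X]) :
    T (aeval ℓ q₁ e) (aeval ℓ q₂ e) = aeval ℓ (p * q₁ * q₂) e := by
  have hlin : ∀ q : R[X], T e (aeval ℓ q e) = aeval ℓ (p * q) e := by
    intro q
    induction q using Polynomial.induction_on' with
    | add f g hf hg => simp only [map_add, mul_add, LinearMap.add_apply, hf, hg]
    | monomial k r => simp [aeval_monomial, ← hp]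
  rw [apply_aeval_eq_of_apply_eq hsym, ← Module.End.mul_apply (aeval ℓ q₁), ← map_mul, hlin,
    mul_assoc]

theorem apply_comm_of_cyclic (hsym : ∀ u v, T (ℓ u) v = T u (ℓ v))
    (hp : ∀ k : ℕ, T e ((ℓ ^ k) e) = aeval ℓ p ((ℓ ^ k) e))
    (hcyc : ∀ u, ∃ q : R[X], aeval ℓ q e = u) (u v : E) : T u v = T v u := by
  obtain ⟨q₁, rfl⟩ := hcyc u
  obtain ⟨q₂, rfl⟩ := hcyc v
  rw [apply_aeval_aeval_eq hsym hp, apply_aeval_aeval_eq hsym hp, mul_right_comm]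

theorem apply_assoc_of_cyclic (hsym : ∀ u v, T (ℓ u) v = T u (ℓ v))
    (hp : ∀ k : ℕ, T e ((ℓ ^ k) e) = aeval ℓ p ((ℓ ^ k) e))
    (hcyc : ∀ u, ∃ q : R[X], aeval ℓ q e = u) (u v w : E) :
    T (T u v) w = T u (T v w) := by
  obtain ⟨q₁, rfl⟩ := hcyc u
  obtain ⟨q₂, rfl⟩ := hcyc v
  obtain ⟨q₃, rfl⟩ := hcyc w
  simp only [apply_aeval_aeval_eq hsym hp]
  congr 2
  ring

end CyclicProduct

/-- let T be a (1,2)-tensor field with T(Lξ,η) = T(ξ,Lη) for an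
operator field L admitting a cyclic vector field ξ, and suppose
T(L^pξ, L^qξ) = R·L^{p+q}ξ with R a polynomial in L (with function
coefficients). Then the product u∘v = T(u,v) is commutative and associative. -/
theorem symmetry_tensor_comm_assoc
    {E : Type*} [AddCommGroup E] [Module ℝ E] [FiniteDimensional ℝ E]
    (n : ℕ) (hn : Module.finrank ℝ E = n)
    (L : E → (E →ₗ[ℝ] E)) (T : E → (E →ₗ[ℝ] E →ₗ[ℝ] E)) (ξ : E → E)
    (hcyc : ∀ x, LinearIndependent ℝ (fun k : Fin n => ((L x) ^ (k : ℕ)) (ξ x)))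
    (hsym : ∀ x u v, T x ((L x) u) v = T x u ((L x) v))
    (hR : ∀ x, ∃ p : Polynomial ℝ, ∀ i j : ℕ,
      T x (((L x) ^ i) (ξ x)) (((L x) ^ j) (ξ x))
        = (Polynomial.aeval (L x) p) (((L x) ^ (i + j)) (ξ x))) :
    ∀ x u v w, T x u v = T x v u ∧ T x (T x u v) w = T x u (T x v w) := by
  intro x u v w
  obtain ⟨p, hp⟩ := hR x
  have hp₀ (k : ℕ) : T x (ξ x) ((L x ^ k) (ξ x)) = aeval (L x) p ((L x ^ k) (ξ x)) := by
    simpa using hp 0 k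
  have hspan := (hcyc x).span_eq_top_of_card_eq_finrank' (by simp [hn])
  have hgen := Module.End.exists_aeval_apply_eq_of_span_pow_eq_top hspan
  exact ⟨apply_comm_of_cyclic (hsym x) hp₀ hgen u v, apply_assoc_of_cyclic (hsym x) hp₀ hgen u v w⟩
end
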